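/- Let N be a simple network with root r (i.e., N contains at least one reticulation vertex and every cut-arc of N is trivial), and suppose S is an SN-set of T(N) with 1 < |S| < |L(N)|. Then there exists an in-out root embedding in N: that is, there exist leaves x, z ∈ S and y ∉ S and an embedding of the triplet xz|y in N whose summit is r, i.e., a vertex q ≠ r and paths q→x, q→z, r→q, r→y that are pairwise vertex-disjoint except at their endpoints. -/

import Mathlib

/-!
Common definitions for formalizing "Constructing the Simplest Possible
Phylogenetic Network from Triplets" (van Iersel, Kelk).

A directed graph on a vertex type `V` is given by its arc set `A : Set (V × V)`.
-/

namespace Phylo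

variable {V L : Type}

/-- In-degree of a vertex. -/
noncomputable def indeg (A : Set (V × V)) (v : V) : ℕ := {u | (u, v) ∈ A}.ncard

/-- Out-degree of a vertex. -/
noncomputable def outdeg (A : Set (V × V)) (v : V) : ℕ := {w | (v, w) ∈ A}.ncard

/-- The root: indegree 0 and outdegree 2. -/
def IsRoot (A : Set (V × V)) (v : V) : Prop := indeg A v = 0 ∧ outdeg A v = 2

/-- A split vertex: indegree 1 and outdegree 2. -/
def IsSplit (A : Set (V × V)) (v : V) : Prop := indeg A v = 1 ∧ outdeg A v = 2

/-- A reticulation vertex: indegree 2 and outdegree 1. -/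
def IsRetic (A : Set (V × V)) (v : V) : Prop := indeg A v = 2 ∧ outdeg A v = 1

/-- A leaf vertex: indegree 1 and outdegree 0. -/
def IsLeafV (A : Set (V × V)) (v : V) : Prop := indeg A v = 1 ∧ outdeg A v = 0

/-- Directed reachability (reflexive-transitive closure of the arc relation). -/
def Reaches (A : Set (V × V)) : V → V → Prop :=
  Relation.ReflTransGen fun u v => (u, v) ∈ A

/-- A directed graph is acyclic if it has no directed cycle. -/
def Acyclic (A : Set (V × V)) : Prop := ∀ u v, (u, v) ∈ A → ¬ Reaches A v u

/-- Adjacency in the underlying undirected graph. -/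
def UAdj (A : Set (V × V)) (u v : V) : Prop := (u, v) ∈ A ∨ (v, u) ∈ A

/-- The underlying undirected graph is connected (on all of `V`). -/
def ConnectedGraph (A : Set (V × V)) : Prop :=
  ∀ u v : V, Relation.ReflTransGen (UAdj A) u v

/-- Undirected connectivity within a set `S` of vertices (in the induced subgraph). -/
def ConnWithin (A : Set (V × V)) (S : Set V) : Prop :=
  ∀ u ∈ S, ∀ v ∈ S, Relation.ReflTransGen (fun a b => a ∈ S ∧ b ∈ S ∧ UAdj A a b) u v

/-- A set of at least two vertices inducing a biconnected subgraph: it is connected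
and stays connected after removal of any single vertex. -/
def Biconnected (A : Set (V × V)) (S : Set V) : Prop :=
  2 ≤ S.ncard ∧ ConnWithin A S ∧ ∀ w ∈ S, ConnWithin A (S \ {w})

/-- A biconnected component: a maximal biconnected subgraph. -/
def BiconnComp (A : Set (V × V)) (S : Set V) : Prop :=
  Biconnected A S ∧ ∀ S', Biconnected A S' → S ⊆ S' → S' = S

/-- The arcs leaving a set of vertices. -/
def outArcs (A : Set (V × V)) (S : Set V) : Set (V × V) :=
  {a ∈ A | a.1 ∈ S ∧ a.2 ∉ S}

/-- A phylogenetic network on the (finite) vertex type `V` with leaves labelled by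
elements of `L`: a directed acyclic graph with exactly one vertex of indegree 0
and outdegree 2 (the root), all other vertices being split vertices, reticulation
vertices or leaves; leaves are distinctly labelled.  Moreover (to avoid redundant
networks) every nontrivial biconnected component has at least three outgoing arcs. -/
structure PhyloNetwork (V L : Type) : Type where
  vfin : Finite V
  arcs : Set (V × V)
  lab : V → L
  acyclic : Acyclic arcs
  root_ex : ∃ r, IsRoot arcs r
  root_unique : ∀ r r', IsRoot arcs r → IsRoot arcs r' → r = r'
  vertex_type : ∀ v, IsRoot arcs v ∨ IsSplit arcs v ∨ IsRetic arcs v ∨ IsLeafV arcs v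
  lab_inj : ∀ u v, IsLeafV arcs u → IsLeafV arcs v → lab u = lab v → u = v
  bicomp_out : ∀ S, BiconnComp arcs S → S.ncard ≠ 2 → 3 ≤ (outArcs arcs S).ncard

/-- The set of leaf labels of a network. -/
def leafSet (N : PhyloNetwork V L) : Set L := {x | ∃ v, IsLeafV N.arcs v ∧ N.lab v = x}

/-- A directed path, as a nonempty list of distinct vertices consecutively joined by arcs. -/
def IsPath (A : Set (V × V)) (l : List V) : Prop :=
  l ≠ [] ∧ l.Nodup ∧ l.Chain' fun a b => (a, b) ∈ A

/-- A directed path from `u` to `v`. -/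
def IsPathFromTo (A : Set (V × V)) (l : List V) (u v : V) : Prop :=
  IsPath A l ∧ l.head? = some u ∧ l.getLast? = some v

/-- `w` is an endpoint of the path `l`. -/
def IsEndpoint (l : List V) (w : V) : Prop := l.head? = some w ∨ l.getLast? = some w

/-- Two paths are internally vertex-disjoint: any common vertex is an endpoint of both. -/
def IntDisjoint (p q : List V) : Prop :=
  ∀ w, w ∈ p → w ∈ q → IsEndpoint p w ∧ IsEndpoint q w

/-- An embedding of the triplet `xy|z` with summit `p` and cherry vertex `q`:
pairwise internally vertex-disjoint directed paths `q→x`, `q→y`, `p→q`, `p→z`. -/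
def HasEmbedding (A : Set (V × V)) (p q x y z : V) : Prop :=
  p ≠ q ∧ ∃ Pqx Pqy Ppq Ppz : List V,
    IsPathFromTo A Pqx q x ∧ IsPathFromTo A Pqy q y ∧
    IsPathFromTo A Ppq p q ∧ IsPathFromTo A Ppz p z ∧
    IntDisjoint Pqx Pqy ∧ IntDisjoint Pqx Ppq ∧ IntDisjoint Pqx Ppz ∧
    IntDisjoint Pqy Ppq ∧ IntDisjoint Pqy Ppz ∧ IntDisjoint Ppq Ppz

/-- The triplet `xy|z` (on leaf labels) is consistent with the network `N`. -/
def ConsistentT (N : PhyloNetwork V L) (x y z : L) : Prop :=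
  ∃ a b c : V, IsLeafV N.arcs a ∧ IsLeafV N.arcs b ∧ IsLeafV N.arcs c ∧
    N.lab a = x ∧ N.lab b = y ∧ N.lab c = z ∧ a ≠ b ∧ a ≠ c ∧ b ≠ c ∧
    ∃ p q, HasEmbedding N.arcs p q a b c

/-- `T(N)`: the set of all triplets consistent with `N`
(the triple `(x,y,z)` codes the triplet `xy|z`). -/
def TN (N : PhyloNetwork V L) : Set (L × L × L) := {t | ConsistentT N t.1 t.2.1 t.2.2}

/-- `N` is consistent with every triplet in `T`. -/
def ConsistentSet (N : PhyloNetwork V L) (T : Set (L × L × L)) : Prop :=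
  ∀ t ∈ T, ConsistentT N t.1 t.2.1 t.2.2

/-- `N` reflects `T` if `T(N) = T`. -/
def Reflects (N : PhyloNetwork V L) (T : Set (L × L × L)) : Prop := TN N = T

/-- `L(T)`: the set of leaves occurring in a triplet set. -/
def tripletLeaves (T : Set (L × L × L)) : Set L :=
  {x | ∃ t ∈ T, x = t.1 ∨ x = t.2.1 ∨ x = t.2.2}

/-- `T` is a well-formed triplet set: in each triplet the three leaves are distinct, and
the coding is invariant under swapping the first two coordinates (`xy|z = yx|z`). -/
def IsTripletSet (T : Set (L × L × L)) : Prop :=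
  ∀ t ∈ T, (t.2.1, t.1, t.2.2) ∈ T ∧ t.1 ≠ t.2.1 ∧ t.1 ≠ t.2.2 ∧ t.2.1 ≠ t.2.2

/-- `T` is dense: for any three distinct leaves at least one triplet on them is present. -/
def DenseT (T : Set (L × L × L)) : Prop :=
  ∀ x ∈ tripletLeaves T, ∀ y ∈ tripletLeaves T, ∀ z ∈ tripletLeaves T,
    x ≠ y → x ≠ z → y ≠ z → (x, y, z) ∈ T ∨ (x, z, y) ∈ T ∨ (y, z, x) ∈ T

/-- `S` is an SN-set of `T` with respect to the leaf set `U`: `S ⊆ U` and there is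
no triplet `xy|z ∈ T` with `x, z ∈ S` and `y ∉ S`. -/
def SNSetOn (T : Set (L × L × L)) (U S : Set L) : Prop :=
  S ⊆ U ∧ ¬ ∃ x y z, (x, y, z) ∈ T ∧ x ∈ S ∧ z ∈ S ∧ y ∉ S

/-- `S` is an SN-set of `T`. -/
def SNSet (T : Set (L × L × L)) (S : Set L) : Prop := SNSetOn T (tripletLeaves T) S

/-- `S` is a maximal SN-set: a nontrivial SN-set not strictly contained
in any nontrivial SN-set. -/
def MaxSNSet (T : Set (L × L × L)) (S : Set L) : Prop :=
  SNSet T S ∧ S ≠ tripletLeaves T ∧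
    ∀ S', SNSet T S' → S' ≠ tripletLeaves T → S ⊆ S' → S' = S

/-- `S` is an SN-set maximal under the restriction of not containing `B`. -/
def MaxSNAvoid (T : Set (L × L × L)) (B S : Set L) : Prop :=
  SNSet T S ∧ ¬ B ⊆ S ∧ ∀ S', SNSet T S' → ¬ B ⊆ S' → S ⊆ S' → S' = S

/-- `T|S`: the triplets of `T` all of whose leaves lie in `S`. -/
def restrictT (T : Set (L × L × L)) (S : Set L) : Set (L × L × L) :=
  {t ∈ T | t.1 ∈ S ∧ t.2.1 ∈ S ∧ t.2.2 ∈ S}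

/-- A cut-arc: an arc whose removal disconnects the underlying undirected graph. -/
def CutArc (A : Set (V × V)) (a : V × V) : Prop :=
  a ∈ A ∧ ¬ ConnectedGraph (A \ {a})

/-- A simple network: it contains a reticulation vertex and all its cut-arcs are
trivial (i.e. end in a leaf). -/
def SimpleNet (N : PhyloNetwork V L) : Prop :=
  (∃ v, IsRetic N.arcs v) ∧ ∀ a, CutArc N.arcs a → IsLeafV N.arcs a.2

/-- A level-`k` network: every biconnected component contains at most `k`
reticulation vertices. -/
def IsLevel (N : PhyloNetwork V L) (k : ℕ) : Prop :=
  ∀ S, BiconnComp N.arcs S → {v ∈ S | IsRetic N.arcs v}.ncard ≤ k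

/-- The total number of reticulation vertices of a network. -/
noncomputable def numRetic (N : PhyloNetwork V L) : ℕ := {v | IsRetic N.arcs v}.ncard

/-- The level of a network: the smallest `k` such that it is a level-`k` network. -/
noncomputable def netLevel (N : PhyloNetwork V L) : ℕ := sInf {k | IsLevel N k}

/-- A highest cut-arc: a cut-arc not reachable from any other cut-arc. -/
def HighestCutArc (A : Set (V × V)) (a : V × V) : Prop :=
  CutArc A a ∧ ∀ b, CutArc A b → b ≠ a → ¬ Reaches A b.2 a.1

/-- The set of leaf labels below a vertex `v`. -/
def leavesBelowV (N : PhyloNetwork V L) (v : V) : Set L :=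
  {x | ∃ w, IsLeafV N.arcs w ∧ Reaches N.arcs v w ∧ N.lab w = x}

/-- An (undirected) cycle in the underlying undirected graph, as a list of at least
three distinct vertices that are consecutively adjacent, the last being adjacent
to the first. -/
def IsUCycle (A : Set (V × V)) (l : List V) : Prop :=
  3 ≤ l.length ∧ l.Nodup ∧ l.Chain' (UAdj A) ∧
    ∃ u w, l.head? = some u ∧ l.getLast? = some w ∧ UAdj A w u

/-- A highest reticulation: a reticulation lying on a cycle through the root. -/
def HighestRetic (N : PhyloNetwork V L) (r : V) : Prop :=
  IsRetic N.arcs r ∧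
    ∃ c, IsUCycle N.arcs c ∧ r ∈ c ∧ ∃ rt, IsRoot N.arcs rt ∧ rt ∈ c

/-- `BHR(N)`: the set of leaves below a highest reticulation. -/
def BHR (N : PhyloNetwork V L) : Set L :=
  {x | ∃ r, HighestRetic N r ∧ x ∈ leavesBelowV N r}

/-- The collection of sets of leaves below the highest cut-arcs of `N`. -/
def highCutArcLeafSets (N : PhyloNetwork V L) : Set (Set L) :=
  {S | ∃ a, HighestCutArc N.arcs a ∧ S = leavesBelowV N a.2}

/-- `CutInduce(N,T)`: the induced triplet set on the sets of leaves below the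
highest cut-arcs of `N`. -/
def CutInduce (N : PhyloNetwork V L) (T : Set (L × L × L)) :
    Set (Set L × Set L × Set L) :=
  {t | t.1 ∈ highCutArcLeafSets N ∧ t.2.1 ∈ highCutArcLeafSets N ∧
       t.2.2 ∈ highCutArcLeafSets N ∧
       t.1 ≠ t.2.1 ∧ t.1 ≠ t.2.2 ∧ t.2.1 ≠ t.2.2 ∧
       ∃ x ∈ t.1, ∃ y ∈ t.2.1, ∃ z ∈ t.2.2, (x, y, z) ∈ T}

/-- `T ∇ C`: the triplet set induced by a collection `C` of leaf sets. -/
def TInduced (T : Set (L × L × L)) (C : Set (Set L)) : Set (Set L × Set L × Set L) :=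
  {t | t.1 ∈ C ∧ t.2.1 ∈ C ∧ t.2.2 ∈ C ∧
       t.1 ≠ t.2.1 ∧ t.1 ≠ t.2.2 ∧ t.2.1 ≠ t.2.2 ∧
       ∃ x ∈ t.1, ∃ y ∈ t.2.1, ∃ z ∈ t.2.2, (x, y, z) ∈ T}

/-- A label-preserving isomorphism of networks. -/
def NetIso {V₁ V₂ L : Type} (N₁ : PhyloNetwork V₁ L) (N₂ : PhyloNetwork V₂ L) : Prop :=
  ∃ e : V₁ ≃ V₂, (∀ u v : V₁, (u, v) ∈ N₁.arcs ↔ (e u, e v) ∈ N₂.arcs) ∧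
    ∀ v, IsLeafV N₁.arcs v → N₂.lab (e v) = N₁.lab v

/-- A (rooted, binary) phylogenetic tree given by its arc set: acyclic, a unique
vertex of indegree 0, every vertex of indegree at most 1 and outdegree 0 or 2.
(The single-vertex tree is allowed.) -/
def IsTreeArcs (A : Set (V × V)) : Prop :=
  Acyclic A ∧ (∃! r, indeg A r = 0) ∧ (∀ v, indeg A v ≤ 1) ∧
    ∀ v, outdeg A v = 0 ∨ outdeg A v = 2

/-- The leaf labels of a tree (leaves are the vertices of outdegree 0). -/
def treeLeafSet (A : Set (V × V)) (lab : V → L) : Set L :=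
  {x | ∃ v, outdeg A v = 0 ∧ lab v = x}

/-- The triplet `xy|z` is consistent with the tree given by `A` and labelling `lab`. -/
def TreeConsistentTriplet (A : Set (V × V)) (lab : V → L) (x y z : L) : Prop :=
  ∃ a b c : V, outdeg A a = 0 ∧ outdeg A b = 0 ∧ outdeg A c = 0 ∧
    lab a = x ∧ lab b = y ∧ lab c = z ∧ a ≠ b ∧ a ≠ c ∧ b ≠ c ∧
    ∃ p q, HasEmbedding A p q a b c

/-- A CandidateTBR SN-set: an SN-set `S` of `T` such that `T|S` is consistent with
some phylogenetic tree on the leaf set `S`. -/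
def CandidateTBR (T : Set (L × L × L)) (S : Set L) : Prop :=
  SNSet T S ∧ ∃ (V : Type) (_ : Finite V) (A : Set (V × V)) (lab : V → L),
    IsTreeArcs A ∧
    (∀ u v, outdeg A u = 0 → outdeg A v = 0 → lab u = lab v → u = v) ∧
    treeLeafSet A lab = S ∧
    ∀ t ∈ restrictT T S, TreeConsistentTriplet A lab t.1 t.2.1 t.2.2

/-- `S'` is an SN-set of `T|S` (with leaf set `S`) that is maximal under the
restriction of being a nontrivial (proper) subset of `S`. -/
def MaxProperSN (T : Set (L × L × L)) (S S' : Set L) : Prop :=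
  SNSetOn (restrictT T S) S S' ∧ S' ≠ S ∧
    ∀ S'', SNSetOn (restrictT T S) S S'' → S'' ≠ S → S' ⊆ S'' → S'' = S'

end Phylo

/-!
Because `N` is simple, no vertex other than the root lies on every root-leaf path: the arc
entering such a dominator (or, for a reticulation, the arc leaving it) would be a non-trivial
cut-arc. Menger's theorem for two paths, proved by one augmentation step, then yields a fork:
two paths from the root to distinct leaves meeting only at the root.

A root path to any further leaf `c` leaves the fork for the last time at a vertex `w`, which is
not the root because the root has only two children. If `w` lies on the prong to `t₁`, this is
an embedding of `t₁c|t₂` with summit `r`, and rerouting that prong through `w` to `c` gives a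
new fork. As `S` is an SN-set, no embedded triplet `xy|z` has `x, z ∈ S` and `y ∉ S`. So a
fork cannot have both ends in `S` (attach a leaf outside `S`); one with both ends outside `S`
becomes one with exactly one end in `S` (attach a leaf of `S`); and a second leaf of `S`
attached to the latter must branch off the prong ending in `S`.
-/

namespace List

variable {α : Type*}

@[simp]
theorem consecutivePairs_cons_cons (a b : α) (l : List α) :
    (a :: b :: l).consecutivePairs = (a, b) :: (b :: l).consecutivePairs :=
  rfl

theorem mem_consecutivePairs_iff {l : List α} {a b : α} :
    (a, b) ∈ l.consecutivePairs ↔ ∃ l₁ l₂, l = l₁ ++ a :: b :: l₂ := by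
  induction l with
  | nil => simp
  | cons x t ih =>
    cases t with
    | nil =>
      simp only [consecutivePairs, tail_cons, zip_nil_right, not_mem_nil,
        false_iff, not_exists]
      intro l₁ l₂ h
      have := congrArg length h
      simp at this
      omega
    | cons y t =>
      rw [consecutivePairs_cons_cons, mem_cons, ih, Prod.mk.injEq]
      constructor
      · rintro (⟨rfl, rfl⟩ | ⟨l₁, l₂, h⟩)
        · exact ⟨[], t, rfl⟩
        · exact ⟨x :: l₁, l₂, by rw [h]; rfl⟩
      · rintro ⟨_ | ⟨z, l₁⟩, l₂, h⟩
        · simp only [nil_append, cons.injEq] at h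
          exact Or.inl ⟨h.1.symm, h.2.1.symm⟩
        · simp only [cons_append, cons.injEq] at h
          exact Or.inr ⟨l₁, l₂, h.2⟩

theorem mem_consecutivePairs_append_cons_cons (l₁ l₂ : List α) (a b : α) :
    (a, b) ∈ (l₁ ++ a :: b :: l₂).consecutivePairs :=
  mem_consecutivePairs_iff.2 ⟨l₁, l₂, rfl⟩

theorem isChain_iff_forall_mem_consecutivePairs {R : α → α → Prop} {l : List α} :
    l.IsChain R ↔ ∀ a b, (a, b) ∈ l.consecutivePairs → R a b := by
  simp only [isChain_iff_forall_rel_of_append_cons_cons, mem_consecutivePairs_iff]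
  exact ⟨fun h a b ⟨l₁, l₂, hl⟩ => h hl, fun h a b l₁ l₂ hl => h a b ⟨l₁, l₂, hl⟩⟩

theorem fst_mem_of_mem_consecutivePairs {l : List α} {a b : α}
    (h : (a, b) ∈ l.consecutivePairs) : a ∈ l := by
  obtain ⟨l₁, l₂, rfl⟩ := mem_consecutivePairs_iff.1 h
  simp

theorem snd_mem_of_mem_consecutivePairs {l : List α} {a b : α}
    (h : (a, b) ∈ l.consecutivePairs) : b ∈ l := by
  obtain ⟨l₁, l₂, rfl⟩ := mem_consecutivePairs_iff.1 h
  simp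

theorem Nodup.eq_of_append_cons_eq {l l₁ l₂ m₁ m₂ : List α} {a : α} (hl : l.Nodup)
    (h₁ : l = l₁ ++ a :: l₂) (h₂ : l = m₁ ++ a :: m₂) : l₁ = m₁ ∧ l₂ = m₂ := by
  subst h₁
  have ha := nodup_middle.1 hl
  rw [nodup_cons, mem_append, not_or] at ha
  obtain ⟨h, -, h'⟩ := (append_cons_inj_of_notMem ha.1.1 ha.1.2).1 h₂
  exact ⟨h, h'⟩

theorem Nodup.eq_of_mem_consecutivePairs_left {l : List α} {a b b' : α} (hl : l.Nodup)
    (h : (a, b) ∈ l.consecutivePairs) (h' : (a, b') ∈ l.consecutivePairs) : b = b' := by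
  obtain ⟨l₁, l₂, hl₁⟩ := mem_consecutivePairs_iff.1 h
  obtain ⟨m₁, m₂, hm₁⟩ := mem_consecutivePairs_iff.1 h'
  exact (cons.inj (hl.eq_of_append_cons_eq hl₁ hm₁).2).1

theorem Nodup.eq_of_mem_consecutivePairs_right {l : List α} {a a' b : α}
    (hl : l.Nodup) (h : (a, b) ∈ l.consecutivePairs) (h' : (a', b) ∈ l.consecutivePairs) :
    a = a' := by
  obtain ⟨l₁, l₂, hl₁⟩ := mem_consecutivePairs_iff.1 h
  obtain ⟨m₁, m₂, hm₁⟩ := mem_consecutivePairs_iff.1 h'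
  rw [show l₁ ++ a :: b :: l₂ = (l₁ ++ [a]) ++ b :: l₂ by simp] at hl₁
  rw [show m₁ ++ a' :: b :: m₂ = (m₁ ++ [a']) ++ b :: m₂ by simp] at hm₁
  obtain ⟨-, h⟩ := append_inj' (hl.eq_of_append_cons_eq hl₁ hm₁).1 rfl
  simpa using h

theorem exists_mem_consecutivePairs_of_head_mem_of_last_notMem {Z : Set α} :
    ∀ {l : List α} {a b : α}, l.head? = some a → a ∈ Z → l.getLast? = some b → b ∉ Z →
      ∃ x y, (x, y) ∈ l.consecutivePairs ∧ x ∈ Z ∧ y ∉ Z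
  | [], _, _, ha, _, _, _ => by simp at ha
  | [x], _, _, ha, haZ, hb, hbZ => by
    simp only [head?_cons, Option.some.injEq, getLast?_singleton] at ha hb
    subst ha hb
    exact absurd haZ hbZ
  | x :: y :: t, _, _, ha, haZ, hb, hbZ => by
    simp only [head?_cons, Option.some.injEq] at ha
    subst ha
    by_cases hy : y ∈ Z
    · obtain ⟨u, v, huv, hu, hv⟩ :=
        exists_mem_consecutivePairs_of_head_mem_of_last_notMem rfl hy
          (by rwa [getLast?_cons_cons] at hb) hbZ
      exact ⟨u, v, by simp [huv], hu, hv⟩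
    · exact ⟨x, y, by simp, haZ, hy⟩

theorem head_mem_of_mem_of_closed {Z : Set α} :
    ∀ {l : List α}, (∀ x y, (x, y) ∈ l.consecutivePairs → y ∈ Z → x ∈ Z) →
      ∀ {c a : α}, c ∈ l → c ∈ Z → l.head? = some a → a ∈ Z
  | [], _, _, _, hc, _, _ => by simp at hc
  | [x], _, _, _, hc, hcZ, ha => by simp_all
  | x :: y :: t, hZ, c, a, hc, hcZ, ha => by
    simp only [head?_cons, Option.some.injEq] at ha
    subst ha
    rcases mem_cons.1 hc with rfl | hc
    · exact hcZ
    · have hyZ := head_mem_of_mem_of_closed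
        (fun u v huv => hZ u v (by simp [huv])) hc hcZ rfl
      exact hZ x y (by simp) hyZ

theorem eq_of_mem_consecutivePairs_of_closed {Z : Set α} :
    ∀ {l : List α}, (∀ x y, (x, y) ∈ l.consecutivePairs → y ∈ Z → x ∈ Z) →
      ∀ {x y x' y' : α}, (x, y) ∈ l.consecutivePairs → x ∈ Z → y ∉ Z →
        (x', y') ∈ l.consecutivePairs → x' ∈ Z → y' ∉ Z → x = x' ∧ y = y'
  | [], _, _, _, _, _, h, _, _, _, _, _ => by simp at h
  | [_], _, _, _, _, _, h, _, _, _, _, _ => by simp [consecutivePairs] at h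
  | a :: b :: t, hZ, x, y, x', y', h, hx, hy, h', hx', hy' => by
    have hZt : ∀ u v, (u, v) ∈ (b :: t).consecutivePairs → v ∈ Z → u ∈ Z :=
      fun u v huv => hZ u v (by simp [huv])
    simp only [consecutivePairs_cons_cons, mem_cons, Prod.mk.injEq] at h h'
    rcases h with ⟨rfl, rfl⟩ | h <;> rcases h' with ⟨rfl, rfl⟩ | h'
    · exact ⟨rfl, rfl⟩
    · exact absurd (head_mem_of_mem_of_closed hZt
        (fst_mem_of_mem_consecutivePairs h') hx' rfl) hy
    · exact absurd (head_mem_of_mem_of_closed hZt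
        (fst_mem_of_mem_consecutivePairs h) hx rfl) hy'
    · exact eq_of_mem_consecutivePairs_of_closed hZt h hx hy h' hx' hy'

theorem exists_append_cons_forall_notMem {M : Set α} :
    ∀ {l : List α}, (∃ x ∈ l, x ∈ M) →
      ∃ l₁ w l₂, l = l₁ ++ w :: l₂ ∧ w ∈ M ∧ ∀ x ∈ l₂, x ∉ M
  | [], h => by simp at h
  | a :: t, h => by
    by_cases ht : ∃ x ∈ t, x ∈ M
    · obtain ⟨l₁, w, l₂, rfl, hw, hl₂⟩ := exists_append_cons_forall_notMem ht
      exact ⟨a :: l₁, w, l₂, rfl, hw, hl₂⟩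
    · push Not at ht
      obtain ⟨x, hx, hxM⟩ := h
      rcases mem_cons.1 hx with rfl | hx
      · exact ⟨[], x, t, rfl, hxM, ht⟩
      · exact absurd hxM (ht x hx)

end List

namespace Phylo

variable {V L : Type}

section Paths
variable {A B : Set (V × V)} {p q l₁ l₂ : List V} {u v w x y : V}

theorem IsPathFromTo.nodup (h : IsPathFromTo A p u v) : p.Nodup := h.1.2.1

theorem IsPathFromTo.arc_mem (h : IsPathFromTo A p u v) (hxy : (x, y) ∈ p.consecutivePairs) :
    (x, y) ∈ A :=
  List.isChain_iff_forall_mem_consecutivePairs.1 h.1.2.2 x y hxy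

theorem IsPathFromTo.eq_cons (h : IsPathFromTo A p u v) : ∃ t, p = u :: t :=
  List.head?_eq_some_iff.1 h.2.1

theorem IsPathFromTo.head_mem (h : IsPathFromTo A p u v) : u ∈ p := List.mem_of_head? h.2.1

theorem IsPathFromTo.last_mem (h : IsPathFromTo A p u v) : v ∈ p := List.mem_of_getLast? h.2.2

theorem IsPathFromTo.isEndpoint_head (h : IsPathFromTo A p u v) : IsEndpoint p u := Or.inl h.2.1

theorem IsPathFromTo.isEndpoint_last (h : IsPathFromTo A p u v) : IsEndpoint p v := Or.inr h.2.2

theorem IsPathFromTo.mono (hAB : A ⊆ B) (h : IsPathFromTo A p u v) : IsPathFromTo B p u v :=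
  ⟨⟨h.1.1, h.1.2.1, h.1.2.2.imp fun _ _ hab => hAB hab⟩, h.2⟩

theorem isPathFromTo_singleton (u : V) : IsPathFromTo A [u] u u :=
  ⟨⟨List.cons_ne_nil _ _, List.nodup_singleton u, List.isChain_singleton u⟩, rfl, rfl⟩

theorem IsPathFromTo.cons (h : IsPathFromTo A p v w) (huv : (u, v) ∈ A) (hu : u ∉ p) :
    IsPathFromTo A (u :: p) u w := by
  obtain ⟨t, rfl⟩ := h.eq_cons
  exact ⟨⟨by simp, List.nodup_cons.2 ⟨hu, h.nodup⟩, List.isChain_cons_cons.2 ⟨huv, h.1.2.2⟩⟩,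
    rfl, by simpa using h.2.2⟩

theorem IsPathFromTo.append (h₁ : IsPathFromTo A p u w) (h₂ : IsPathFromTo A (w :: q) w v)
    (hpq : ∀ x ∈ p, x ∉ q) : IsPathFromTo A (p ++ q) u v := by
  obtain ⟨p', rfl⟩ := List.getLast?_eq_some_iff.1 h₁.2.2
  refine ⟨⟨by simp, ?_, ?_⟩, by simpa using h₁.2.1, ?_⟩
  · exact List.nodup_append.2 ⟨h₁.nodup, (List.nodup_cons.1 h₂.nodup).2,
      fun a ha b hb hab => hpq a ha (hab ▸ hb)⟩
  · refine List.isChain_append.2 ⟨h₁.1.2.2, (List.isChain_cons.1 h₂.1.2.2).2, ?_⟩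
    simp only [List.getLast?_concat, Option.mem_def, Option.some.injEq, forall_eq']
    exact (List.isChain_cons.1 h₂.1.2.2).1
  · cases q with
    | nil => simpa using h₂.2.2
    | cons b t => simpa [List.getLast?_append] using h₂.2.2

theorem IsPathFromTo.split (h : IsPathFromTo A (l₁ ++ w :: l₂) u v) :
    IsPathFromTo A (l₁ ++ [w]) u w ∧ IsPathFromTo A (w :: l₂) w v := by
  have hpre : l₁ ++ [w] <+: l₁ ++ w :: l₂ := ⟨l₂, by simp⟩
  have hsuf : w :: l₂ <:+ l₁ ++ w :: l₂ := List.suffix_append l₁ _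
  refine ⟨⟨⟨by simp, h.nodup.sublist hpre.sublist, h.1.2.2.prefix hpre⟩, ?_, by simp⟩,
    ⟨⟨by simp, h.nodup.sublist hsuf.sublist, h.1.2.2.suffix hsuf⟩, rfl, ?_⟩⟩
  · simpa using h.2.1
  · simpa using h.2.2

theorem IsPathFromTo.notMem_suffix_of_mem_prefix (h : IsPathFromTo A (l₁ ++ w :: l₂) u v)
    (hx : x ∈ l₁) : x ∉ w :: l₂ :=
  fun hx' => (List.nodup_append.1 h.nodup).2.2 x hx x hx' rfl

theorem IsPathFromTo.head_notMem_suffix (h : IsPathFromTo A (l₁ ++ w :: l₂) u v) (hw : w ≠ u) :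
    u ∉ w :: l₂ := by
  obtain ⟨t, ht⟩ := h.eq_cons
  cases l₁ with
  | nil =>
    simp only [List.nil_append, List.cons.injEq] at ht
    exact absurd ht.1 hw
  | cons a l₁ =>
    simp only [List.cons_append, List.cons.injEq] at ht
    exact ht.1 ▸ h.notMem_suffix_of_mem_prefix List.mem_cons_self

theorem IsPathFromTo.exists_arc_from (h : IsPathFromTo A p u v) (hx : x ∈ p) (hxv : x ≠ v) :
    ∃ z, (x, z) ∈ p.consecutivePairs := by
  obtain ⟨l₁, l₂, rfl⟩ := List.append_of_mem hx
  cases l₂ with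
  | nil => exact absurd (by simpa using h.2.2) hxv
  | cons z l₂ => exact ⟨z, List.mem_consecutivePairs_append_cons_cons l₁ l₂ x z⟩

theorem IsPathFromTo.exists_arc_to (h : IsPathFromTo A p u v) (hx : x ∈ p) (hxu : x ≠ u) :
    ∃ z, (z, x) ∈ p.consecutivePairs := by
  obtain ⟨l₁, l₂, rfl⟩ := List.append_of_mem hx
  rcases List.eq_nil_or_concat l₁ with rfl | ⟨l₁, z, rfl⟩
  · exact absurd (by simpa using h.2.1) hxu
  · exact ⟨z, List.mem_consecutivePairs_iff.2 ⟨l₁, l₂, by simp⟩⟩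

theorem IsPathFromTo.not_mem_consecutivePairs_to_head (h : IsPathFromTo A p u v) (z : V) :
    (z, u) ∉ p.consecutivePairs := by
  obtain ⟨t, rfl⟩ := h.eq_cons
  exact fun hz => (List.nodup_cons.1 h.nodup).1 (List.of_mem_zip hz).2

theorem IsPathFromTo.reaches (h : IsPathFromTo A p u v) : Reaches A u v := by
  obtain ⟨t, rfl⟩ := h.eq_cons
  exact List.relationReflTransGen_of_exists_isChain_cons t h.1.2.2
    (by simpa [List.getLast?_eq_some_getLast] using h.2.2)

theorem Reaches.exists_path (h : Reaches A u v) : ∃ p, IsPathFromTo A p u v := by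
  induction h using Relation.ReflTransGen.head_induction_on with
  | refl => exact ⟨[v], isPathFromTo_singleton v⟩
  | @head a b hab _ ih =>
    obtain ⟨p, hp⟩ := ih
    by_cases ha : a ∈ p
    · obtain ⟨l₁, l₂, rfl⟩ := List.append_of_mem ha
      exact ⟨a :: l₂, hp.split.2⟩
    · exact ⟨a :: p, hp.cons hab ha⟩

theorem Reaches.avoiding_or_through (h : Reaches A u x) :
    Reaches {e ∈ A | e.2 ≠ v} u x ∨ Reaches A u v ∧ Reaches A v x := by
  induction h with
  | refl => exact Or.inl Relation.ReflTransGen.refl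
  | @tail y z hy hyz ih =>
    rcases ih with ih | ⟨huv, hvy⟩
    · by_cases hz : z = v
      · exact Or.inr ⟨hz ▸ hy.tail hyz, hz ▸ Relation.ReflTransGen.refl⟩
      · exact Or.inl (ih.tail ⟨hyz, hz⟩)
    · exact Or.inr ⟨huv, hvy.tail hyz⟩

end Paths

section Acyclic
variable {A B : Set (V × V)} {u v : V}

theorem Acyclic.mono (hac : Acyclic A) (hBA : B ⊆ A) : Acyclic B :=
  fun u v huv hvu => hac u v (hBA huv) (Relation.ReflTransGen.mono (fun _ _ h => hBA h) _ _ hvu)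

theorem Acyclic.ne_of_arc (hac : Acyclic A) (huv : (u, v) ∈ A) : u ≠ v := by
  rintro rfl
  exact hac u u huv Relation.ReflTransGen.refl

theorem Acyclic.eq_of_reaches (hac : Acyclic A) (huv : Reaches A u v) (hvu : Reaches A v u) :
    u = v := by
  rcases Relation.ReflTransGen.cases_head huv with rfl | ⟨c, huc, hcv⟩
  · rfl
  · exact absurd (hcv.trans hvu) (hac u c huc)

theorem Acyclic.exists_reaches_sink [Finite V] (hac : Acyclic A) (v : V) :
    ∃ w, Reaches A v w ∧ ∀ z, (w, z) ∉ A := by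
  have : Std.Irrefl (Relation.TransGen fun a b : V => (b, a) ∈ A) := ⟨fun u h => by
    obtain ⟨c, hcu, huc⟩ := Relation.TransGen.tail'_iff.1 h
    exact hac u c huc (Relation.reflTransGen_swap.1 hcu)⟩
  have hwf : WellFounded fun a b : V => (b, a) ∈ A :=
    Subrelation.wf (fun h => Relation.TransGen.single h)
      (Finite.wellFounded_of_trans_of_irrefl (Relation.TransGen fun a b : V => (b, a) ∈ A))
  obtain ⟨w, hw, hmin⟩ := hwf.has_min {w | Reaches A v w} ⟨v, Relation.ReflTransGen.refl⟩
  exact ⟨w, hw, fun z hz => hmin z (Relation.ReflTransGen.tail hw hz) hz⟩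

theorem Acyclic.exists_source_reaches [Finite V] (hac : Acyclic A) (v : V) :
    ∃ w, Reaches A w v ∧ ∀ z, (z, w) ∉ A := by
  have : Std.Irrefl (Relation.TransGen fun a b : V => (a, b) ∈ A) := ⟨fun u h => by
    obtain ⟨c, huc, hcu⟩ := Relation.TransGen.head'_iff.1 h
    exact hac u c huc hcu⟩
  have hwf : WellFounded fun a b : V => (a, b) ∈ A :=
    Subrelation.wf (fun h => Relation.TransGen.single h)
      (Finite.wellFounded_of_trans_of_irrefl (Relation.TransGen fun a b : V => (a, b) ∈ A))
  obtain ⟨w, hw, hmin⟩ := hwf.has_min {w | Reaches A w v} ⟨v, Relation.ReflTransGen.refl⟩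
  exact ⟨w, hw, fun z hz => hmin z (Relation.ReflTransGen.head hz hw) hz⟩

theorem cutArc_of_unique_entering_arc {W : Set V} {e : V × V} {x y : V} (he : e ∈ A)
    (hclosed : ∀ a b, (a, b) ∈ A → a ∈ W → b ∈ W)
    (hentry : ∀ a b, (a, b) ∈ A → a ∉ W → b ∈ W → (a, b) = e) (hx : x ∈ W) (hy : y ∉ W) :
    CutArc A e := by
  refine ⟨he, fun hconn => ?_⟩
  have outside : ∀ z, Relation.ReflTransGen (UAdj (A \ {e})) y z → z ∉ W := by
    intro z hz
    induction hz with
    | refl => exact hy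
    | @tail b c _ hbc ih =>
      rcases hbc with ⟨hbc, hne⟩ | ⟨hcb, -⟩
      · exact fun hc => hne (hentry b c hbc ih hc)
      · exact fun hc => ih (hclosed c b hcb hc)
  exact outside x (hconn y x) hx

end Acyclic

section Degrees
variable {A : Set (V × V)} {u u' v : V}

theorem eq_of_indeg_eq_one (h : indeg A v = 1) (hu : (u, v) ∈ A) (hu' : (u', v) ∈ A) :
    u = u' := by
  obtain ⟨a, ha⟩ := Set.ncard_eq_one.1 h
  have h₁ : u ∈ {x | (x, v) ∈ A} := hu
  have h₂ : u' ∈ {x | (x, v) ∈ A} := hu'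
  rw [ha] at h₁ h₂
  exact h₁.trans h₂.symm

theorem eq_of_outdeg_eq_one (h : outdeg A v = 1) (hu : (v, u) ∈ A) (hu' : (v, u') ∈ A) :
    u = u' := by
  obtain ⟨a, ha⟩ := Set.ncard_eq_one.1 h
  have h₁ : u ∈ {x | (v, x) ∈ A} := hu
  have h₂ : u' ∈ {x | (v, x) ∈ A} := hu'
  rw [ha] at h₁ h₂
  exact h₁.trans h₂.symm

theorem not_arc_of_indeg_eq_zero [Finite V] (h : indeg A v = 0) (z : V) : (z, v) ∉ A := by
  rw [indeg, Set.ncard_eq_zero (Set.toFinite _)] at h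
  exact fun hz => (h ▸ hz : z ∈ (∅ : Set V))

theorem not_arc_of_outdeg_eq_zero [Finite V] (h : outdeg A v = 0) (z : V) : (v, z) ∉ A := by
  rw [outdeg, Set.ncard_eq_zero (Set.toFinite _)] at h
  exact fun hz => (h ▸ hz : z ∈ (∅ : Set V))

end Degrees

section Network
variable {N : PhyloNetwork V L} {r u v x : V}

theorem IsLeafV.not_arc (hv : IsLeafV N.arcs v) (z : V) : (v, z) ∉ N.arcs := by
  have := N.vfin
  exact not_arc_of_outdeg_eq_zero hv.2 z

theorem IsRoot.not_arc (hr : IsRoot N.arcs r) (z : V) : (z, r) ∉ N.arcs := by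
  have := N.vfin
  exact not_arc_of_indeg_eq_zero hr.1 z

theorem IsRoot.not_isLeafV (hr : IsRoot N.arcs r) : ¬ IsLeafV N.arcs r :=
  fun h => by simpa [h.2] using hr.2

theorem IsLeafV.ne_of_isRoot (hv : IsLeafV N.arcs v) (hr : IsRoot N.arcs r) : v ≠ r :=
  fun h => hr.not_isLeafV (h ▸ hv)

theorem IsLeafV.eq_of_reaches (hv : IsLeafV N.arcs v) (h : Reaches N.arcs v x) : x = v := by
  rcases Relation.ReflTransGen.cases_head h with rfl | ⟨c, hc, -⟩
  · rfl
  · exact absurd hc (hv.not_arc c)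

theorem PhyloNetwork.outdeg_le_two (N : PhyloNetwork V L) (v : V) : outdeg N.arcs v ≤ 2 := by
  rcases N.vertex_type v with h | h | h | h <;> simp [h.2]

theorem PhyloNetwork.false_of_three_children (N : PhyloNetwork V L) {a b c : V}
    (ha : (u, a) ∈ N.arcs) (hb : (u, b) ∈ N.arcs) (hc : (u, c) ∈ N.arcs)
    (hab : a ≠ b) (hac : a ≠ c) (hbc : b ≠ c) : False := by
  have := N.vfin
  have hsub : ({a, b, c} : Set V) ⊆ {x | (u, x) ∈ N.arcs} := by
    rintro x (rfl | rfl | rfl) <;> assumption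
  have h3 := Set.ncard_le_ncard hsub (Set.toFinite _)
  rw [Set.ncard_eq_three.2 ⟨a, b, c, hab, hac, hbc, rfl⟩] at h3
  exact absurd (h3.trans (N.outdeg_le_two u)) (by norm_num)

theorem IsRoot.reaches (hr : IsRoot N.arcs r) (v : V) : Reaches N.arcs r v := by
  have := N.vfin
  obtain ⟨w, hwv, hw⟩ := N.acyclic.exists_source_reaches v
  have h0 : indeg N.arcs w = 0 := by simp [indeg, hw]
  rcases N.vertex_type w with h | h | h | h
  · rwa [N.root_unique w r h hr] at hwv
  all_goals simp [h.1] at h0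

theorem PhyloNetwork.exists_leaf_reaches (N : PhyloNetwork V L) (v : V) :
    ∃ l, IsLeafV N.arcs l ∧ Reaches N.arcs v l := by
  have := N.vfin
  obtain ⟨w, hvw, hw⟩ := N.acyclic.exists_reaches_sink v
  have h0 : outdeg N.arcs w = 0 := by simp [outdeg, hw]
  refine ⟨w, ?_, hvw⟩
  rcases N.vertex_type w with h | h | h | h <;> first | exact h | simp [h.2] at h0

end Network

section Menger
variable {A B F : Set (V × V)} {P Q P₁ P₂ : List V} {T : Set V} {r t t' t₁ t₂ v a a' b : V}

def IsFork (A : Set (V × V)) (r : V) (P₁ P₂ : List V) (t₁ t₂ : V) : Prop :=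
  IsPathFromTo A P₁ r t₁ ∧ IsPathFromTo A P₂ r t₂ ∧ ∀ x ∈ P₁, x ∈ P₂ → x = r

def HasFork (A : Set (V × V)) (r t₁ t₂ : V) : Prop := ∃ P₁ P₂, IsFork A r P₁ P₂ t₁ t₂

theorem IsFork.symm (h : IsFork A r P₁ P₂ t₁ t₂) : IsFork A r P₂ P₁ t₂ t₁ :=
  ⟨h.2.1, h.1, fun x h₂ h₁ => h.2.2 x h₁ h₂⟩

theorem HasFork.symm (h : HasFork A r t₁ t₂) : HasFork A r t₂ t₁ :=
  let ⟨_, _, h⟩ := h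
  ⟨_, _, h.symm⟩

theorem IsFork.mono (hAB : A ⊆ B) (h : IsFork A r P₁ P₂ t₁ t₂) : IsFork B r P₁ P₂ t₁ t₂ :=
  ⟨h.1.mono hAB, h.2.1.mono hAB, h.2.2⟩

theorem exists_fork_of_flow [Finite V] {s₁ s₂ : V} (hac : Acyclic F)
    (hin : ∀ a a' b, (a, b) ∈ F → (a', b) ∈ F → a = a')
    (hout : ∀ v ∉ T, ∀ a, (a, v) ∈ F → ∃ b, (v, b) ∈ F)
    (h₁ : (r, s₁) ∈ F) (h₂ : (r, s₂) ∈ F) (hs : s₁ ≠ s₂) :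
    ∃ t₁ ∈ T, ∃ t₂ ∈ T, t₁ ≠ t₂ ∧ HasFork F r t₁ t₂ := by
  have sink_mem : ∀ {F' : Set (V × V)} {p : List V} {w : V}, F' ⊆ F → IsPathFromTo F' p r w →
      (∀ z, (w, z) ∉ F') → w ≠ r → (∀ b, (w, b) ∈ F → (w, b) ∈ F') → w ∈ T := by
    intro F' p w hF' hp hw hwr hlift
    by_contra hwT
    obtain ⟨z, hz⟩ := hp.exists_arc_to hp.last_mem hwr
    obtain ⟨b, hb⟩ := hout w hwT z (hF' (hp.arc_mem hz))
    exact hw b (hlift b hb)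
  obtain ⟨w₁, hrw₁, hw₁⟩ := hac.exists_reaches_sink r
  obtain ⟨p₁, hp₁⟩ := hrw₁.exists_path
  have hw₁r : w₁ ≠ r := by rintro rfl; exact hw₁ s₁ h₁
  have hw₁T := sink_mem subset_rfl hp₁ hw₁ hw₁r fun _ => id
  set F₁ := {e ∈ F | e ∉ p₁.consecutivePairs}
  have hF₁ : F₁ ⊆ F := fun _ he => he.1
  have hr₁ : ∃ s, (r, s) ∈ F₁ := by
    by_cases h : (r, s₁) ∈ p₁.consecutivePairs
    · exact ⟨s₂, h₂, fun h' => hs (hp₁.nodup.eq_of_mem_consecutivePairs_left h h')⟩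
    · exact ⟨s₁, h₁, h⟩
  obtain ⟨w₂, hrw₂, hw₂⟩ := (hac.mono hF₁).exists_reaches_sink r
  obtain ⟨p₂, hp₂⟩ := hrw₂.exists_path
  have hdisj : ∀ x ∈ p₁, x ∈ p₂ → x = r := by
    intro x hx₁ hx₂
    by_contra hxr
    obtain ⟨y₁, hy₁⟩ := hp₁.exists_arc_to hx₁ hxr
    obtain ⟨y₂, hy₂⟩ := hp₂.exists_arc_to hx₂ hxr
    have hy₂F₁ := hp₂.arc_mem hy₂
    rw [← hin y₁ y₂ x (hp₁.arc_mem hy₁) (hF₁ hy₂F₁)] at hy₂F₁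
    exact hy₂F₁.2 hy₁
  have hw₂r : w₂ ≠ r := by
    rintro rfl
    obtain ⟨s, hs⟩ := hr₁
    exact hw₂ s hs
  have hw₂p₁ : w₂ ∉ p₁ := fun h => hw₂r (hdisj w₂ h hp₂.last_mem)
  have hw₂T := sink_mem hF₁ hp₂ hw₂ hw₂r fun b hb =>
    ⟨hb, fun h => hw₂p₁ (List.fst_mem_of_mem_consecutivePairs h)⟩
  exact ⟨w₁, hw₁T, w₂, hw₂T, fun h => hw₂p₁ (h ▸ hp₁.last_mem), p₁, p₂, hp₁,
    hp₂.mono hF₁, hdisj⟩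

def InOrOutUnique (A : Set (V × V)) : Prop :=
  ∀ v, (∀ a a', (a, v) ∈ A → (a', v) ∈ A → a = a') ∨ (∀ b b', (v, b) ∈ A → (v, b') ∈ A → b = b')

def residual (A : Set (V × V)) (P : List V) : Set (V × V) :=
  {e | (e ∈ A ∧ e ∉ P.consecutivePairs) ∨ e.swap ∈ P.consecutivePairs}

def augment (P Q : List V) : Set (V × V) :=
  {e | (e ∈ P.consecutivePairs ∧ e.swap ∉ Q.consecutivePairs) ∨
    (e ∈ Q.consecutivePairs ∧ e.swap ∉ P.consecutivePairs)}

theorem augment_comm (P Q : List V) : augment P Q = augment Q P := by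
  ext e
  exact or_comm

theorem augment_subset (hP : IsPathFromTo A P r t) (hQ : IsPathFromTo (residual A P) Q r t') :
    augment P Q ⊆ A := by
  rintro e (⟨he, -⟩ | ⟨he, hswap⟩)
  · exact hP.arc_mem he
  · rcases hQ.arc_mem he with ⟨heA, -⟩ | h
    · exact heA
    · exact absurd h hswap

theorem exists_augment_arc_from_of_mem_left (hP : IsPathFromTo A P r t)
    (hQ : IsPathFromTo B Q r t') (hvt : v ≠ t) (hvt' : v ≠ t')
    (hav : (a, v) ∈ P.consecutivePairs) (hva : (v, a) ∉ Q.consecutivePairs) :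
    ∃ b, (v, b) ∈ augment P Q := by
  obtain ⟨g, hg⟩ := hP.exists_arc_from (List.snd_mem_of_mem_consecutivePairs hav) hvt
  by_cases hgv : (g, v) ∈ Q.consecutivePairs
  · obtain ⟨z, hz⟩ := hQ.exists_arc_from (List.snd_mem_of_mem_consecutivePairs hgv) hvt'
    refine ⟨z, Or.inr ⟨hz, fun (hzv : (z, v) ∈ P.consecutivePairs) => hva ?_⟩⟩
    rwa [hP.nodup.eq_of_mem_consecutivePairs_right hzv hav] at hz
  · exact ⟨g, Or.inl ⟨hg, hgv⟩⟩

theorem exists_augment_arc_from (hP : IsPathFromTo A P r t) (hQ : IsPathFromTo B Q r t')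
    (hvt : v ≠ t) (hvt' : v ≠ t') (hav : (a, v) ∈ augment P Q) :
    ∃ b, (v, b) ∈ augment P Q := by
  rcases hav with ⟨h, h'⟩ | ⟨h, h'⟩
  · exact exists_augment_arc_from_of_mem_left hP hQ hvt hvt' h h'
  · rw [augment_comm]
    exact exists_augment_arc_from_of_mem_left hQ hP hvt' hvt h h'

theorem eq_of_mem_augment_of_mem_left (hdeg : InOrOutUnique A)
    (hP : IsPathFromTo A P r t) (hQ : IsPathFromTo (residual A P) Q r t')
    (ht : ∀ a a', (a, t) ∈ A → (a', t) ∈ A → a = a') (ht' : ∀ z, (t', z) ∉ A)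
    (hP₁ : (a, b) ∈ P.consecutivePairs) (hP₂ : (b, a) ∉ Q.consecutivePairs)
    (hQ₁ : (a', b) ∈ Q.consecutivePairs) (hQ₂ : (b, a') ∉ P.consecutivePairs) : a = a' := by
  have hab := hP.arc_mem hP₁
  have ha'b : (a', b) ∈ A := by
    rcases hQ.arc_mem hQ₁ with ⟨h, -⟩ | h
    · exact h
    · exact absurd h hQ₂
  by_cases hbt : b = t
  · subst hbt
    exact ht a a' hab ha'b
  obtain ⟨g, hg⟩ := hP.exists_arc_from (List.snd_mem_of_mem_consecutivePairs hP₁) hbt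
  have hbt' : b ≠ t' := by
    rintro rfl
    exact ht' g (hP.arc_mem hg)
  obtain ⟨z, hz⟩ := hQ.exists_arc_from (List.snd_mem_of_mem_consecutivePairs hQ₁) hbt'
  rcases hQ.arc_mem hz with ⟨hbz, hzP⟩ | (hzb : (z, b) ∈ P.consecutivePairs)
  · rcases hdeg b with hin | hout
    · exact hin a a' hab ha'b
    · rw [hout g z (hP.arc_mem hg) hbz] at hg
      exact absurd hg hzP
  · rw [hP.nodup.eq_of_mem_consecutivePairs_right hzb hP₁] at hz
    exact absurd hz hP₂

theorem eq_of_mem_augment (hdeg : InOrOutUnique A)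
    (hP : IsPathFromTo A P r t) (hQ : IsPathFromTo (residual A P) Q r t')
    (ht : ∀ a a', (a, t) ∈ A → (a', t) ∈ A → a = a') (ht' : ∀ z, (t', z) ∉ A)
    (hab : (a, b) ∈ augment P Q) (ha'b : (a', b) ∈ augment P Q) : a = a' := by
  rcases hab with ⟨h, h'⟩ | ⟨h, h'⟩ <;> rcases ha'b with ⟨k, k'⟩ | ⟨k, k'⟩
  · exact hP.nodup.eq_of_mem_consecutivePairs_right h k
  · exact eq_of_mem_augment_of_mem_left hdeg hP hQ ht ht' h h' k k'
  · exact (eq_of_mem_augment_of_mem_left hdeg hP hQ ht ht' k k' h h').symm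
  · exact hQ.nodup.eq_of_mem_consecutivePairs_right h k

theorem exists_fork_of_augmenting_path [Finite V] (hac : Acyclic A) (hdeg : InOrOutUnique A)
    (hP : IsPathFromTo A P r t) (hQ : IsPathFromTo (residual A P) Q r t')
    (hrt : r ≠ t) (hrt' : r ≠ t')
    (ht : ∀ a a', (a, t) ∈ A → (a', t) ∈ A → a = a') (ht' : ∀ z, (t', z) ∉ A) :
    ∃ t₁ ∈ ({t, t'} : Set V), ∃ t₂ ∈ ({t, t'} : Set V), t₁ ≠ t₂ ∧ HasFork A r t₁ t₂ := by
  have hFA := augment_subset hP hQ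
  obtain ⟨s₁, hs₁⟩ := hP.exists_arc_from hP.head_mem hrt
  obtain ⟨s₂, hs₂⟩ := hQ.exists_arc_from hQ.head_mem hrt'
  have hs : s₁ ≠ s₂ := by
    rintro rfl
    rcases hQ.arc_mem hs₂ with ⟨-, h⟩ | h
    · exact h hs₁
    · exact hP.not_mem_consecutivePairs_to_head s₁ h
  obtain ⟨t₁, ht₁, t₂, ht₂, hne, P₁, P₂, hF⟩ := exists_fork_of_flow (T := {t, t'})
    (hac.mono hFA) (fun _ _ _ => eq_of_mem_augment hdeg hP hQ ht ht')
    (fun v hv _ => exists_augment_arc_from hP hQ (fun h => hv (Or.inl h)) fun h => hv (Or.inr h))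
    (Or.inl ⟨hs₁, hQ.not_mem_consecutivePairs_to_head s₁⟩)
    (Or.inr ⟨hs₂, hP.not_mem_consecutivePairs_to_head s₂⟩) hs
  exact ⟨t₁, ht₁, t₂, ht₂, hne, P₁, P₂, hF.mono hFA⟩

theorem exists_dominator_of_not_reaches_residual (hP : IsPathFromTo A P r t) (htT : t ∈ T)
    (hno : ∀ t' ∈ T, ¬ Reaches (residual A P) r t') :
    ∃ v ≠ r, ∀ t' ∈ T, ∀ p, IsPathFromTo A p r t' → v ∈ p := by
  set Z := {x | Reaches (residual A P) r x}
  have hrZ : r ∈ Z := Relation.ReflTransGen.refl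
  have hback : ∀ x y, (x, y) ∈ P.consecutivePairs → y ∈ Z → x ∈ Z :=
    fun x y h hy => hy.tail (Or.inr h)
  obtain ⟨x, y, hxy, hx, hy⟩ :=
    List.exists_mem_consecutivePairs_of_head_mem_of_last_notMem hP.2.1 hrZ hP.2.2 (hno t htT)
  refine ⟨y, fun h => hy (h ▸ hrZ), fun t' ht' p hp => ?_⟩
  -- `p` leaves `Z` along an arc of `P`, and `(x, y)` is the only arc of `P` leaving `Z`.
  obtain ⟨x', y', h', hx', hy'⟩ :=
    List.exists_mem_consecutivePairs_of_head_mem_of_last_notMem hp.2.1 hrZ hp.2.2 (hno t' ht')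
  have hP' : (x', y') ∈ P.consecutivePairs := by
    by_contra h
    exact hy' (hx'.tail (Or.inl ⟨hp.arc_mem h', h⟩))
  obtain ⟨-, rfl⟩ := List.eq_of_mem_consecutivePairs_of_closed hback hxy hx hy hP' hx' hy'
  exact List.snd_mem_of_mem_consecutivePairs h'

theorem exists_fork_or_dominator [Finite V] (hac : Acyclic A) (hdeg : InOrOutUnique A)
    (hTsink : ∀ t ∈ T, ∀ z, (t, z) ∉ A)
    (hTin : ∀ t ∈ T, ∀ a a', (a, t) ∈ A → (a', t) ∈ A → a = a')
    (hrT : r ∉ T) (htT : t ∈ T) (hrt : Reaches A r t) :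
    (∃ t₁ ∈ T, ∃ t₂ ∈ T, t₁ ≠ t₂ ∧ HasFork A r t₁ t₂) ∨
      ∃ v ≠ r, ∀ t' ∈ T, ∀ p, IsPathFromTo A p r t' → v ∈ p := by
  obtain ⟨P, hP⟩ := hrt.exists_path
  by_cases haug : ∃ t' ∈ T, Reaches (residual A P) r t'
  · obtain ⟨t', ht'T, hrt'⟩ := haug
    obtain ⟨Q, hQ⟩ := hrt'.exists_path
    have hsub : ({t, t'} : Set V) ⊆ T := by rintro _ (rfl | rfl) <;> assumption
    obtain ⟨t₁, ht₁, t₂, ht₂, hne, hF⟩ := exists_fork_of_augmenting_path hac hdeg hP hQ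
      (fun h => hrT (h ▸ htT)) (fun h => hrT (h ▸ ht'T)) (hTin t htT) (hTsink t' ht'T)
    exact Or.inl ⟨t₁, hsub ht₁, t₂, hsub ht₂, hne, hF⟩
  · push Not at haug
    exact Or.inr (exists_dominator_of_not_reaches_residual hP htT haug)

end Menger

section Dominators
variable {N : PhyloNetwork V L} {r v a b l₁ l₂ : V}

theorem PhyloNetwork.inOrOutUnique (N : PhyloNetwork V L) : InOrOutUnique N.arcs := by
  intro v
  rcases N.vertex_type v with h | h | h | h
  · exact Or.inl fun a _ ha => absurd ha (h.not_arc a)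
  · exact Or.inl fun _ _ => eq_of_indeg_eq_one h.1
  · exact Or.inr fun _ _ => eq_of_outdeg_eq_one h.2
  · exact Or.inl fun _ _ => eq_of_indeg_eq_one h.1

theorem eq_of_arc_of_dominator (hr : IsRoot N.arcs r) (hvr : v ≠ r)
    (hdom : ∀ l, IsLeafV N.arcs l → ∀ p, IsPathFromTo N.arcs p r l → v ∈ p)
    (hab : (a, b) ∈ N.arcs) (ha : ¬ Reaches N.arcs v a) (hb : Reaches N.arcs v b) : b = v := by
  by_contra hbv
  obtain ⟨l, hl, hbl⟩ := N.exists_leaf_reaches b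
  have hra := ((hr.reaches a).avoiding_or_through (v := v)).resolve_right fun h => ha h.2
  have hbl' := (hbl.avoiding_or_through (v := v)).resolve_right fun h =>
    hbv (N.acyclic.eq_of_reaches hb h.1).symm
  obtain ⟨p, hp⟩ := Reaches.exists_path ((hra.tail ⟨hab, hbv⟩).trans hbl')
  obtain ⟨z, hz⟩ := hp.exists_arc_to (hdom l hl p (hp.mono fun _ h => h.1)) hvr
  exact (hp.arc_mem hz).2 rfl

theorem exists_cutArc_of_dominator (hr : IsRoot N.arcs r) (hvr : v ≠ r)
    (hl₁ : IsLeafV N.arcs l₁) (hl₂ : IsLeafV N.arcs l₂) (hl : l₁ ≠ l₂)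
    (hdom : ∀ l, IsLeafV N.arcs l → ∀ p, IsPathFromTo N.arcs p r l → v ∈ p) :
    ∃ e, CutArc N.arcs e ∧ ¬ IsLeafV N.arcs e.2 := by
  set W := {w | Reaches N.arcs v w}
  have hleaf : ∀ l, IsLeafV N.arcs l → l ∈ W := by
    intro l hl
    obtain ⟨p, hp⟩ := (hr.reaches l).exists_path
    obtain ⟨p₁, p₂, rfl⟩ := List.append_of_mem (hdom l hl p hp)
    exact hp.split.2.reaches
  have hrW : r ∉ W := fun h => hvr (N.acyclic.eq_of_reaches h (hr.reaches v))
  have not_leaf : ∀ {u}, (∀ l, IsLeafV N.arcs l → Reaches N.arcs u l) → ¬ IsLeafV N.arcs u :=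
    fun h hu => hl ((hu.eq_of_reaches (h l₁ hl₁)).trans (hu.eq_of_reaches (h l₂ hl₂)).symm)
  have hvleaf := not_leaf hleaf
  rcases N.vertex_type v with h | h | h | h
  · exact absurd (N.root_unique v r h hr) hvr
  · obtain ⟨a, -, ha⟩ := (Relation.ReflTransGen.cases_tail (hr.reaches v)).resolve_left hvr
    refine ⟨(a, v), cutArc_of_unique_entering_arc ha (fun _ _ h hb => hb.tail h)
      (fun a' b hab ha' hb => ?_) (hleaf l₁ hl₁) hrW, hvleaf⟩
    obtain rfl := eq_of_arc_of_dominator hr hvr hdom hab ha' hb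
    rw [eq_of_indeg_eq_one h.1 hab ha]
  · obtain ⟨s, hs, -⟩ := (Relation.ReflTransGen.cases_head (hleaf l₁ hl₁)).resolve_left
      fun h => hvleaf (h ▸ hl₁)
    have below : ∀ w ∈ W, w ≠ v → Reaches N.arcs s w := by
      intro w hw hwv
      obtain ⟨c, hc, hcw⟩ := (Relation.ReflTransGen.cases_head hw).resolve_left (Ne.symm hwv)
      rwa [eq_of_outdeg_eq_one h.2 hc hs] at hcw
    have hleaf' : ∀ l, IsLeafV N.arcs l → Reaches N.arcs s l :=
      fun l hl => below l (hleaf l hl) fun h => hvleaf (h ▸ hl)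
    refine ⟨(v, s), cutArc_of_unique_entering_arc (W := {w | Reaches N.arcs s w}) hs
      (fun _ _ h hb => hb.tail h) (fun a b hab ha hb => ?_) (hleaf' l₁ hl₁)
      (fun h => hrW (Relation.ReflTransGen.head hs h)), not_leaf hleaf'⟩
    have hbW : b ∈ W := Relation.ReflTransGen.head hs hb
    by_cases haW : a ∈ W
    · obtain rfl : a = v := by_contra fun hav => ha (below a haW hav)
      rw [eq_of_outdeg_eq_one h.2 hab hs]
    · rw [eq_of_arc_of_dominator hr hvr hdom hab haW hbW] at hb
      exact absurd hb (N.acyclic v s hs)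
  · exact absurd h hvleaf

theorem SimpleNet.exists_fork (hsimple : SimpleNet N) (hr : IsRoot N.arcs r)
    (hl₁ : IsLeafV N.arcs l₁) (hl₂ : IsLeafV N.arcs l₂) (hl : l₁ ≠ l₂) :
    ∃ t₁ t₂, IsLeafV N.arcs t₁ ∧ IsLeafV N.arcs t₂ ∧ t₁ ≠ t₂ ∧ HasFork N.arcs r t₁ t₂ := by
  have := N.vfin
  rcases exists_fork_or_dominator (T := {t | IsLeafV N.arcs t}) N.acyclic
      N.inOrOutUnique (fun _ ht => ht.not_arc) (fun _ ht _ _ => eq_of_indeg_eq_one ht.1)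
      hr.not_isLeafV hl₁ (hr.reaches l₁) with ⟨t₁, ht₁, t₂, ht₂, hne, hF⟩ | ⟨v, hvr, hdom⟩
  · exact ⟨t₁, t₂, ht₁, ht₂, hne, hF⟩
  · obtain ⟨e, he, hleaf⟩ := exists_cutArc_of_dominator hr hvr hl₁ hl₂ hl hdom
    exact (hleaf (hsimple.2 e he)).elim

end Dominators

section Embeddings
variable {A : Set (V × V)} {P₁ P₂ Pc p q : List V} {r w c t₁ t₂ x y z : V}

theorem IntDisjoint.symm (h : IntDisjoint p q) : IntDisjoint q p :=
  fun v hq hp => (h v hp hq).symm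

theorem intDisjoint_of_forall_eq (h : ∀ x ∈ p, x ∈ q → x = w) (hp : IsEndpoint p w)
    (hq : IsEndpoint q w) : IntDisjoint p q :=
  fun x hxp hxq => h x hxp hxq ▸ ⟨hp, hq⟩

theorem intDisjoint_of_forall_notMem (h : ∀ x ∈ p, x ∉ q) : IntDisjoint p q :=
  fun x hxp hxq => absurd hxq (h x hxp)

theorem HasEmbedding.swap (h : HasEmbedding A r w x y z) : HasEmbedding A r w y x z :=
  let ⟨hrw, _, _, _, _, h₁, h₂, h₃, h₄, d₁₂, d₁₃, d₁₄, d₂₃, d₂₄, d₃₄⟩ := h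
  ⟨hrw, _, _, _, _, h₂, h₁, h₃, h₄, d₁₂.symm, d₂₃, d₂₄, d₁₃, d₁₄, d₃₄⟩

theorem IsFork.hasEmbedding_of_branch (hF : IsFork A r P₁ P₂ t₁ t₂) (hw : w ∈ P₁) (hwr : w ≠ r)
    (hPc : IsPathFromTo A Pc w c) (hPcF : ∀ x ∈ Pc, x ∈ P₁ ∨ x ∈ P₂ → x = w) :
    HasEmbedding A r w t₁ c t₂ := by
  obtain ⟨hP₁, hP₂, hF⟩ := hF
  obtain ⟨l₁, l₂, rfl⟩ := List.append_of_mem hw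
  obtain ⟨hpre, hsuf⟩ := hP₁.split
  have hpre₁ : l₁ ++ [w] ⊆ l₁ ++ w :: l₂ :=
    (show l₁ ++ [w] <+: l₁ ++ w :: l₂ from ⟨l₂, by simp⟩).subset
  have hsuf₁ : w :: l₂ ⊆ l₁ ++ w :: l₂ := List.subset_append_right _ _
  have hwP₂ : w ∉ P₂ := fun h => hwr (hF w hw h)
  refine ⟨hwr.symm, _, _, _, _, hsuf, hPc, hpre, hP₂, ?_, ?_, ?_, ?_, ?_, ?_⟩
  · exact intDisjoint_of_forall_eq (fun x hx hx' => hPcF x hx' (Or.inl (hsuf₁ hx)))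
      hsuf.isEndpoint_head hPc.isEndpoint_head
  · refine intDisjoint_of_forall_eq (fun x hx hx' => ?_) hsuf.isEndpoint_head
      hpre.isEndpoint_last
    rcases List.mem_append.1 hx' with hx' | hx'
    · exact absurd hx (hP₁.notMem_suffix_of_mem_prefix hx')
    · exact List.mem_singleton.1 hx'
  · exact intDisjoint_of_forall_notMem fun x hx hx' =>
      hP₁.head_notMem_suffix hwr (hF x (hsuf₁ hx) hx' ▸ hx)
  · exact intDisjoint_of_forall_eq (fun x hx hx' => hPcF x hx (Or.inl (hpre₁ hx')))
      hPc.isEndpoint_head hpre.isEndpoint_last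
  · exact intDisjoint_of_forall_notMem fun x hx hx' => hwP₂ (hPcF x hx (Or.inr hx') ▸ hx')
  · exact intDisjoint_of_forall_eq (fun x hx hx' => hF x (hpre₁ hx) hx')
      hpre.isEndpoint_head hP₂.isEndpoint_head

theorem IsFork.reroute (hF : IsFork A r P₁ P₂ t₁ t₂) (hw : w ∈ P₁)
    (hPc : IsPathFromTo A Pc w c) (hPcF : ∀ x ∈ Pc, x ∈ P₁ ∨ x ∈ P₂ → x = w) :
    HasFork A r c t₂ := by
  obtain ⟨hP₁, hP₂, hF⟩ := hF
  obtain ⟨l₁, l₂, rfl⟩ := List.append_of_mem hw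
  obtain ⟨Pc, rfl⟩ := hPc.eq_cons
  have hpre₁ : l₁ ++ [w] ⊆ l₁ ++ w :: l₂ :=
    (show l₁ ++ [w] <+: l₁ ++ w :: l₂ from ⟨l₂, by simp⟩).subset
  have hwPc : w ∉ Pc := (List.nodup_cons.1 hPc.nodup).1
  have hPc' : ∀ x ∈ Pc, x ∉ l₁ ++ w :: l₂ ∧ x ∉ P₂ := fun x hx =>
    not_or.1 fun h => hwPc (hPcF x (List.mem_cons_of_mem w hx) h ▸ hx)
  refine ⟨_, P₂, hP₁.split.1.append hPc fun x hx hx' => (hPc' x hx').1 (hpre₁ hx), hP₂,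
    fun x hx hx' => ?_⟩
  rcases List.mem_append.1 hx with hx | hx
  · exact hF x (hpre₁ hx) hx'
  · exact absurd hx' (hPc' x hx).2

end Embeddings

section Attach
variable {N : PhyloNetwork V L} {P₁ P₂ : List V} {r c t₁ t₂ : V}

theorem IsFork.exists_branch (hF : IsFork N.arcs r P₁ P₂ t₁ t₂) (hr : IsRoot N.arcs r)
    (ht₁ : t₁ ≠ r) (ht₂ : t₂ ≠ r) (hc : c ≠ r) :
    ∃ w Pc, w ≠ r ∧ (w ∈ P₁ ∨ w ∈ P₂) ∧ IsPathFromTo N.arcs Pc w c ∧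
      ∀ x ∈ Pc, x ∈ P₁ ∨ x ∈ P₂ → x = w := by
  obtain ⟨P, hP⟩ := (hr.reaches c).exists_path
  obtain ⟨l₁, w, l₂, rfl, hw, hl₂⟩ := List.exists_append_cons_forall_notMem
    (M := {x | x ∈ P₁ ∨ x ∈ P₂}) ⟨r, hP.head_mem, Or.inl hF.1.head_mem⟩
  have hPc := hP.split.2
  have hPcF : ∀ x ∈ w :: l₂, x ∈ P₁ ∨ x ∈ P₂ → x = w := by
    intro x hx hxF
    rcases List.mem_cons.1 hx with rfl | hx
    · rfl
    · exact absurd hxF (hl₂ x hx)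
  refine ⟨w, w :: l₂, ?_, hw, hPc, hPcF⟩
  rintro rfl
  obtain ⟨s₁, hs₁⟩ := hF.1.exists_arc_from hF.1.head_mem ht₁.symm
  obtain ⟨s₂, hs₂⟩ := hF.2.1.exists_arc_from hF.2.1.head_mem ht₂.symm
  obtain ⟨s₃, hs₃⟩ := hPc.exists_arc_from hPc.head_mem hc.symm
  have ha₁ := hF.1.arc_mem hs₁
  have ha₃ := hPc.arc_mem hs₃
  have hm₁ := List.snd_mem_of_mem_consecutivePairs hs₁
  have hm₂ := List.snd_mem_of_mem_consecutivePairs hs₂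
  have hm₃ := List.snd_mem_of_mem_consecutivePairs hs₃
  exact N.false_of_three_children ha₁ (hF.2.1.arc_mem hs₂) ha₃
    (fun h => N.acyclic.ne_of_arc ha₁ (hF.2.2 s₁ hm₁ (h ▸ hm₂)).symm)
    (fun h => N.acyclic.ne_of_arc ha₃ (hPcF s₃ hm₃ (Or.inl (h ▸ hm₁))).symm)
    (fun h => N.acyclic.ne_of_arc ha₃ (hPcF s₃ hm₃ (Or.inr (h ▸ hm₂))).symm)

theorem HasFork.attach (hF : HasFork N.arcs r t₁ t₂) (hr : IsRoot N.arcs r) (ht₁ : t₁ ≠ r)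
    (ht₂ : t₂ ≠ r) (hc : c ≠ r) :
    (∃ q, HasEmbedding N.arcs r q t₁ c t₂) ∧ HasFork N.arcs r c t₂ ∨
      (∃ q, HasEmbedding N.arcs r q t₂ c t₁) ∧ HasFork N.arcs r c t₁ := by
  obtain ⟨P₁, P₂, hF⟩ := hF
  obtain ⟨w, Pc, hwr, hw | hw, hPc, hPcF⟩ := hF.exists_branch hr ht₁ ht₂ hc
  · exact Or.inl ⟨⟨w, hF.hasEmbedding_of_branch hw hwr hPc hPcF⟩, hF.reroute hw hPc hPcF⟩
  · have hPcF' : ∀ x ∈ Pc, x ∈ P₂ ∨ x ∈ P₁ → x = w := fun x hx h => hPcF x hx h.symm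
    exact Or.inr ⟨⟨w, hF.symm.hasEmbedding_of_branch hw hwr hPc hPcF'⟩,
      hF.symm.reroute hw hPc hPcF'⟩

end Attach

section SNSets
variable {N : PhyloNetwork V L} {S : Set L} {r a b c t₁ t₂ : V}

theorem SNSet.not_hasEmbedding (hS : SNSet (TN N) S) {p q : V} (ha : IsLeafV N.arcs a)
    (hb : IsLeafV N.arcs b) (hc : IsLeafV N.arcs c) (haS : N.lab a ∈ S) (hbS : N.lab b ∉ S)
    (hcS : N.lab c ∈ S) (hac : a ≠ c) : ¬ HasEmbedding N.arcs p q a b c := fun h =>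
  hS.2 ⟨N.lab a, N.lab b, N.lab c, ⟨a, b, c, ha, hb, hc, rfl, rfl, rfl,
    fun hab => hbS (hab ▸ haS), hac, fun hbc => hbS (hbc ▸ hcS), p, q, h⟩, haS, hcS, hbS⟩

theorem SNSet.exists_fork_mem_notMem (hS : SNSet (TN N) S) (hr : IsRoot N.arcs r)
    (hF : HasFork N.arcs r t₁ t₂) (ht₁ : IsLeafV N.arcs t₁) (ht₂ : IsLeafV N.arcs t₂)
    (ht : t₁ ≠ t₂) (hb : IsLeafV N.arcs b) (hbS : N.lab b ∈ S) (hc : IsLeafV N.arcs c)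
    (hcS : N.lab c ∉ S) :
    ∃ t t', IsLeafV N.arcs t ∧ IsLeafV N.arcs t' ∧ N.lab t ∈ S ∧ N.lab t' ∉ S ∧
      HasFork N.arcs r t t' := by
  have hr₁ := ht₁.ne_of_isRoot hr
  have hr₂ := ht₂.ne_of_isRoot hr
  by_cases h₁ : N.lab t₁ ∈ S <;> by_cases h₂ : N.lab t₂ ∈ S
  · rcases hF.attach hr hr₁ hr₂ (hc.ne_of_isRoot hr) with ⟨⟨q, h⟩, -⟩ | ⟨⟨q, h⟩, -⟩
    · exact absurd h (hS.not_hasEmbedding ht₁ hc ht₂ h₁ hcS h₂ ht)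
    · exact absurd h (hS.not_hasEmbedding ht₂ hc ht₁ h₂ hcS h₁ ht.symm)
  · exact ⟨t₁, t₂, ht₁, ht₂, h₁, h₂, hF⟩
  · exact ⟨t₂, t₁, ht₂, ht₁, h₂, h₁, hF.symm⟩
  · rcases hF.attach hr hr₁ hr₂ (hb.ne_of_isRoot hr) with ⟨-, hF'⟩ | ⟨-, hF'⟩
    · exact ⟨b, t₂, hb, ht₂, hbS, h₂, hF'⟩
    · exact ⟨b, t₁, hb, ht₁, hbS, h₁, hF'⟩

theorem SNSet.exists_root_embedding_of_fork (hS : SNSet (TN N) S) (hr : IsRoot N.arcs r)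
    (hF : HasFork N.arcs r t₁ t₂) (ht₁ : IsLeafV N.arcs t₁) (ht₂ : IsLeafV N.arcs t₂)
    (ht₁S : N.lab t₁ ∈ S) (ht₂S : N.lab t₂ ∉ S) (hb : IsLeafV N.arcs b) (hbS : N.lab b ∈ S)
    (hbt : b ≠ t₁) : ∃ q, HasEmbedding N.arcs r q t₁ b t₂ := by
  rcases hF.attach hr (ht₁.ne_of_isRoot hr) (ht₂.ne_of_isRoot hr) (hb.ne_of_isRoot hr) with
    ⟨h, -⟩ | ⟨⟨q, h⟩, -⟩
  · exact h
  · exact absurd h.swap (hS.not_hasEmbedding hb ht₂ ht₁ hbS ht₂S ht₁S hbt)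

theorem SNSet.exists_leaves (hS : SNSet (TN N) S) (h₁ : 1 < S.ncard)
    (h₂ : S.ncard < (leafSet N).ncard) :
    ∃ a b c, IsLeafV N.arcs a ∧ IsLeafV N.arcs b ∧ IsLeafV N.arcs c ∧
      N.lab a ∈ S ∧ N.lab b ∈ S ∧ N.lab c ∉ S ∧ a ≠ b := by
  have := N.vfin
  have hSL : S ⊆ leafSet N := by
    rintro x hx
    obtain ⟨_, ⟨a, b, c, ha, hb, hc, hla, hlb, hlc, -⟩, hxt⟩ := hS.1 hx
    rcases hxt with rfl | rfl | rfl
    exacts [⟨a, ha, hla⟩, ⟨b, hb, hlb⟩, ⟨c, hc, hlc⟩]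
  have hLfin : (leafSet N).Finite :=
    (Set.finite_range N.lab).subset fun _ ⟨v, _, hv⟩ => ⟨v, hv⟩
  have hSfin := hLfin.subset hSL
  obtain ⟨x, y, hx, hy, hxy⟩ := (Set.one_lt_ncard_iff hSfin).1 h₁
  obtain ⟨z, hzL, hzS⟩ := Set.exists_mem_notMem_of_ncard_lt_ncard h₂ hSfin
  obtain ⟨a, ha, rfl⟩ := hSL hx
  obtain ⟨b, hb, rfl⟩ := hSL hy
  obtain ⟨c, hc, rfl⟩ := hzL
  exact ⟨a, b, c, ha, hb, hc, hx, hy, hzS, fun h => hxy (h ▸ rfl)⟩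

end SNSets

/-- (Existence of an in-out root embedding, from the proof of the
singleton lemma.)  Let `N` be a simple network with root `r` and let `S` be an SN-set
of `T(N)` with `1 < |S| < |L(N)|`.  Then there are leaves `x, z ∈ S` and a leaf
`y ∉ S` together with an embedding of the triplet `xz|y` in `N` whose summit is `r`. -/
theorem in_out_root_embedding (V L : Type) (N : PhyloNetwork V L)
    (hsimple : SimpleNet N) (r : V) (hr : IsRoot N.arcs r)
    (S : Set L) (hS : SNSet (TN N) S)
    (h1 : 1 < S.ncard) (h2 : S.ncard < (leafSet N).ncard) :
    ∃ (a b c q : V),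
      IsLeafV N.arcs a ∧ IsLeafV N.arcs b ∧ IsLeafV N.arcs c ∧
      N.lab a ∈ S ∧ N.lab b ∈ S ∧ N.lab c ∉ S ∧
      a ≠ b ∧ a ≠ c ∧ b ≠ c ∧
      HasEmbedding N.arcs r q a b c := by
  obtain ⟨a, b, c, ha, hb, hc, haS, hbS, hcS, hab⟩ := hS.exists_leaves h1 h2
  obtain ⟨t₁, t₂, ht₁, ht₂, ht₁₂, hF⟩ := hsimple.exists_fork hr ha hb hab
  obtain ⟨x, z, hx, hz, hxS, hzS, hF'⟩ :=
    hS.exists_fork_mem_notMem hr hF ht₁ ht₂ ht₁₂ ha haS hc hcS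
  obtain ⟨y, hy, hyS, hyx⟩ : ∃ y, IsLeafV N.arcs y ∧ N.lab y ∈ S ∧ y ≠ x := by
    by_cases hax : a = x
    · exact ⟨b, hb, hbS, fun h => hab (hax.trans h.symm)⟩
    · exact ⟨a, ha, haS, hax⟩
  obtain ⟨q, hq⟩ := hS.exists_root_embedding_of_fork hr hF' hx hz hxS hzS hy hyS hyx
  exact ⟨x, y, z, q, hx, hy, hz, hxS, hyS, hzS, hyx.symm, fun h => hzS (h ▸ hxS),
    fun h => hzS (h ▸ hyS), hq⟩

end Phylo
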